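/- Let G be a directed graph on vertices {1,...,N} with adjacency matrix A. For all distinct vertices i, j, the number of open simple paths of length k from i to j equals ∑_{S ⊆ V, S ≠ ∅} C(N−|S|, k+1−|S|)·(−1)^{k+1−|S|}·((A_S)^k)_{ij}, where A_S is the restriction of A to S and C(n,m) = 0 when m < 0 or m > n. -/

import Mathlib

open scoped Classical

/-- Binomial coefficient with integer arguments, zero outside `0 ≤ k ≤ n`. -/
def Ibinom (n k : ℤ) : ℤ := if 0 ≤ k ∧ k ≤ n then (n.toNat).choose k.toNat else 0

/-- Restriction of a matrix to a subset of indices (zero outside `S × S`). -/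
def restrict {N : ℕ} (M : Matrix (Fin N) (Fin N) ℤ) (S : Finset (Fin N)) :
    Matrix (Fin N) (Fin N) ℤ :=
  fun i j => if i ∈ S ∧ j ∈ S then M i j else 0

/-!
Expanding the matrix power as a sum over walks, `((A_S)^k)_{ij}` counts the walks of length
`k ≥ 1` from `i` to `j` all of whose vertices lie in `S`. Exchanging the two sums, a walk `w`
visiting `t` distinct vertices contributes `∑_{S ⊇ range w} C(N-|S|, k+1-|S|) (-1)^{k+1-|S|}`.
Writing `|S| = t + m`, `n = N - t` and `r = k + 1 - t`, the identity
`C(n,m) C(n-m,r-m) = C(n,r) C(r,m)` turns this into `C(n,r) (1 - 1)^r`, which is `1` if `r = 0`,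
i.e. if the walk is a path, and `0` otherwise.
-/

open Finset hiding restrict

theorem Matrix.pow_apply_eq_sum_prod {n R : Type*} [Fintype n] [DecidableEq n] [CommSemiring R]
    (M : Matrix n n R) (k : ℕ) (i j : n) :
    (M ^ k) i j = ∑ w : Fin (k + 1) → n,
      if w 0 = i ∧ w (Fin.last k) = j then ∏ m : Fin k, M (w m.castSucc) (w m.succ) else 0 := by
  induction k generalizing i with
  | zero =>
    rw [pow_zero, Matrix.one_apply, ← (Equiv.funUnique (Fin 1) n).symm.sum_comp]
    rcases eq_or_ne i j with rfl | h
    · simp [Fin.last]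
    · rw [if_neg h]
      exact (sum_eq_zero fun x _ => if_neg fun hx => h (hx.1.symm.trans hx.2)).symm
  | succ k ih =>
    rw [pow_succ', Matrix.mul_apply, ← (Fin.consEquiv fun _ => n).sum_comp,
      Fintype.sum_prod_type]
    simp only [ih, mul_sum, mul_ite, mul_zero, Fin.prod_univ_succ, Fin.consEquiv]
    rw [sum_comm]
    simp [ite_and]

theorem Fin.forall_castSucc_and_succ_iff {k : ℕ} (hk : k ≠ 0) {p : Fin (k + 1) → Prop} :
    (∀ m : Fin k, p m.castSucc ∧ p m.succ) ↔ ∀ t, p t := by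
  refine ⟨fun h t => ?_, fun h m => ⟨h _, h _⟩⟩
  obtain ⟨k, rfl⟩ := Nat.exists_eq_succ_of_ne_zero hk
  rcases t.eq_castSucc_or_eq_last with ⟨m, rfl⟩ | rfl
  · exact (h m).1
  · exact (h (Fin.last k)).2

theorem Ibinom_natCast (n k : ℕ) : Ibinom n k = n.choose k := by
  unfold Ibinom
  split_ifs with h
  · simp
  · rw [Nat.choose_eq_zero_of_lt (by omega), Nat.cast_zero]

theorem Ibinom_of_neg {n k : ℤ} (hk : k < 0) : Ibinom n k = 0 :=
  if_neg fun h => (h.1.trans_lt hk).false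

theorem sum_neg_one_pow_sub_mul_choose (r : ℕ) :
    ∑ m ∈ range (r + 1), (-1 : ℤ) ^ (r - m) * r.choose m = if r = 0 then 1 else 0 := by
  simpa [zero_pow_eq] using (add_pow (1 : ℤ) (-1) r).symm

theorem sum_choose_mul_Ibinom_sub (n r : ℕ) :
    ∑ m ∈ range (n + 1),
      n.choose m * (Ibinom ((n : ℤ) - m) ((r : ℤ) - m) * (-1) ^ ((r : ℤ) - m).toNat) =
      if r = 0 then 1 else 0 := by
  have hterm : ∀ m ∈ range (n + 1),
      n.choose m * (Ibinom ((n : ℤ) - m) ((r : ℤ) - m) * (-1) ^ ((r : ℤ) - m).toNat) =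
      n.choose r * ((-1 : ℤ) ^ (r - m) * r.choose m) := by
    intro m hm
    have hmn : m ≤ n := Nat.lt_succ_iff.mp (mem_range.mp hm)
    rcases le_or_gt m r with hmr | hrm
    · rw [← Nat.cast_sub hmn, ← Nat.cast_sub hmr, Ibinom_natCast, Int.toNat_natCast]
      rw [← mul_assoc, ← Nat.cast_mul, ← Nat.choose_mul hmr, Nat.cast_mul]
      ring
    · rw [Ibinom_of_neg (by omega), Nat.choose_eq_zero_of_lt hrm]
      simp
  rw [sum_congr rfl hterm, ← mul_sum]
  rcases le_or_gt r n with hrn | hnr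
  · rw [← sum_subset (range_subset_range.mpr (by omega : r + 1 ≤ n + 1)),
      sum_neg_one_pow_sub_mul_choose]
    · split_ifs with hr <;> simp [hr]
    · intro m _ hm
      rw [Nat.choose_eq_zero_of_lt (by simpa using hm)]
      simp
  · rw [Nat.choose_eq_zero_of_lt hnr, if_neg (by omega)]
    simp

theorem Finset.sum_superset_apply_card {α M : Type*} [Fintype α] [DecidableEq α] [AddCommMonoid M]
    (T : Finset α) (f : ℕ → M) :
    ∑ S with T ⊆ S, f #S =
      ∑ m ∈ range (Fintype.card α - #T + 1), (Fintype.card α - #T).choose m • f (#T + m) := by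
  have hsupersets : ({S | T ⊆ S} : Finset (Finset α)) = (Tᶜ.powerset).image (T ∪ ·) := by
    rw [compl_eq_univ_sdiff, ← Icc_eq_image_powerset (subset_univ T)]
    ext; simp
  have hdisj : ∀ U ∈ Tᶜ.powerset, Disjoint T U := fun U hU =>
    disjoint_of_subset_right (mem_powerset.mp hU) disjoint_compl_right
  rw [hsupersets, sum_image fun U hU V hV h => ?_]
  · rw [sum_congr rfl fun U hU => by rw [card_union_of_disjoint (hdisj U hU)],
      sum_powerset_apply_card (fun m => f (#T + m)), card_compl]
  · rw [← union_sdiff_cancel_left (hdisj U hU), h,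
      union_sdiff_cancel_left (hdisj V hV)]

/-- The coefficient of `((A_S)^k)_{ij}` for `|S| = s`, `N = n` and `K = k + 1` path vertices. -/
def pathCoeff (n K s : ℕ) : ℤ := Ibinom ((n : ℤ) - s) ((K : ℤ) - s) * (-1) ^ ((K : ℤ) - s).toNat

theorem sum_superset_pathCoeff {α : Type*} [Fintype α] [DecidableEq α] (T : Finset α) {K : ℕ}
    (hT : #T ≤ K) :
    ∑ S with T ⊆ S, pathCoeff (Fintype.card α) K #S = if #T = K then 1 else 0 := by
  obtain ⟨r, rfl⟩ := Nat.exists_eq_add_of_le hT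
  rw [sum_superset_apply_card]
  convert sum_choose_mul_Ibinom_sub (Fintype.card α - #T) r using 2 with m
  · rw [pathCoeff, nsmul_eq_mul, Nat.cast_sub T.card_le_univ]
    push_cast
    ring_nf
  · simp

theorem sum_pathCoeff_range_subset {α : Type*} [Fintype α] [DecidableEq α] {K : ℕ}
    (w : Fin K → α) :
    ∑ S with ∀ t, w t ∈ S, pathCoeff (Fintype.card α) K #S =
      if Function.Injective w then 1 else 0 := by
  have hT : #(univ.image w) ≤ K := card_image_le.trans (by simp)
  have hinj : #(univ.image w) = K ↔ Function.Injective w := by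
    rw [← Set.injOn_univ, ← coe_univ, ← card_image_iff, card_univ, Fintype.card_fin]
  simpa [image_subset_iff, hinj] using sum_superset_pathCoeff _ hT

section
variable {N : ℕ} {E : Fin N → Fin N → Prop} {A : Matrix (Fin N) (Fin N) ℤ}

theorem restrict_apply_of_adj (hA : ∀ i j, A i j = if E i j then 1 else 0) (S : Finset (Fin N))
    (a b : Fin N) : restrict A S a b = if (a ∈ S ∧ b ∈ S) ∧ E a b then 1 else 0 := by
  simp only [restrict, hA, ite_and]

theorem restrict_pow_apply_of_adj (hA : ∀ i j, A i j = if E i j then 1 else 0)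
    (S : Finset (Fin N)) {k : ℕ} (hk : k ≠ 0) (i j : Fin N) :
    (restrict A S ^ k) i j = #{w : Fin (k + 1) → Fin N | (w 0 = i ∧ w (Fin.last k) = j ∧
      ∀ m : Fin k, E (w m.castSucc) (w m.succ)) ∧ ∀ t, w t ∈ S} := by
  rw [Matrix.pow_apply_eq_sum_prod, natCast_card_filter]
  refine sum_congr rfl fun w _ => ?_
  rw [prod_congr rfl fun m _ => restrict_apply_of_adj hA S _ _, Fintype.prod_boole]
  simp only [← ite_and]
  congr 1
  rw [forall_and, Fin.forall_castSucc_and_succ_iff hk (p := (w · ∈ S))]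
  apply propext
  tauto
end

theorem stmt5_general (N : ℕ) (E : Fin N → Fin N → Prop)
    (A : Matrix (Fin N) (Fin N) ℤ) (hA : ∀ i j, A i j = if E i j then 1 else 0)
    (k : ℕ) (hk : 1 ≤ k) (i j : Fin N) :
    (Nat.card {w : Fin (k + 1) → Fin N //
        w 0 = i ∧ w (Fin.last k) = j ∧ (∀ m : Fin k, E (w m.castSucc) (w m.succ)) ∧
        Function.Injective w} : ℤ)
      = ∑ S ∈ Finset.univ.powerset.filter (fun S : Finset (Fin N) => S.Nonempty),
          Ibinom ((N : ℤ) - S.card) ((k : ℤ) + 1 - S.card) *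
            (-1) ^ ((k : ℤ) + 1 - S.card).toNat * (restrict A S ^ k) i j := by
  have hk0 : k ≠ 0 := Nat.one_le_iff_ne_zero.mp hk
  set W : Finset (Fin (k + 1) → Fin N) :=
    {w | w 0 = i ∧ w (Fin.last k) = j ∧ ∀ m : Fin k, E (w m.castSucc) (w m.succ)}
  have hwalks (S : Finset (Fin N)) :
      (restrict A S ^ k) i j = ∑ w ∈ W, if ∀ t, w t ∈ S then 1 else 0 := by
    rw [restrict_pow_apply_of_adj hA S hk0, sum_boole, filter_filter]
  have hcoeff (S : Finset (Fin N)) : Ibinom ((N : ℤ) - #S) ((k : ℤ) + 1 - #S) *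
      (-1) ^ ((k : ℤ) + 1 - #S).toNat = pathCoeff N (k + 1) #S := by
    simp [pathCoeff]
  calc _ = ∑ w ∈ W, if Function.Injective w then 1 else 0 := by
        rw [Nat.card_eq_fintype_card, Fintype.card_subtype, sum_boole, filter_filter]
        simp only [and_assoc]
    _ = ∑ w ∈ W, ∑ S with ∀ t, w t ∈ S, pathCoeff N (k + 1) #S := by
        simp only [← sum_pathCoeff_range_subset, Fintype.card_fin]
    _ = ∑ S, pathCoeff N (k + 1) #S * (restrict A S ^ k) i j := by
        simp only [hwalks, mul_sum, mul_boole, sum_filter]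
        exact sum_comm
    _ = _ := by
        simp only [hcoeff]
        rw [powerset_univ, sum_filter_of_ne]
        intro S _ hS
        rw [nonempty_iff_ne_empty]
        rintro rfl
        simp [hwalks] at hS

theorem stmt5 (N : ℕ) (E : Fin N → Fin N → Prop)
    (A : Matrix (Fin N) (Fin N) ℤ) (hA : ∀ i j, A i j = if E i j then 1 else 0)
    (k : ℕ) (hk : 1 ≤ k) (i j : Fin N) (hij : i ≠ j) :
    (Nat.card {w : Fin (k + 1) → Fin N //
        w 0 = i ∧ w (Fin.last k) = j ∧ (∀ m : Fin k, E (w m.castSucc) (w m.succ)) ∧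
        Function.Injective w} : ℤ)
      = ∑ S ∈ Finset.univ.powerset.filter (fun S : Finset (Fin N) => S.Nonempty),
          Ibinom ((N : ℤ) - S.card) ((k : ℤ) + 1 - S.card) *
            (-1) ^ ((k : ℤ) + 1 - S.card).toNat * (restrict A S ^ k) i j :=
  stmt5_general N E A hA k hk i j
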